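/- Let P be a transition kernel on finite S, A, let π be a stationary policy, let μ be a probability distribution on S, and let γ ∈ [0,1). Define the row vector ρ₀ on S×A by ρ₀(s,a) = μ(s)·π(a|s), the iterates ρ_{t+1} = ρ_t·P^π, and the occupancy measure ν_π(s,a) = (1−γ)·∑_{t=0}^∞ γ^t·ρ_t(s,a) (the series converges since 0 ≤ γ < 1). Then: (i) for every s ∈ S, ∑_{s'∈S, a∈A} ν_π(s',a)·( 1{s'=s} − γ·P(s|s',a) ) = (1−γ)·μ(s); and (ii) for every r : S×A → ℝ, ∑_{(s,a)∈S×A} ν_π(s,a)·r(s,a) = (1−γ)·V_r^{π,P}(μ). -/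

import Mathlib

open Matrix MeasureTheory ProbabilityTheory

/-- A transition kernel on finite state and action spaces. -/
def IsKernel {S A : Type*} [Fintype S] (P : S × A → S → ℝ) : Prop :=
  (∀ sa s', 0 ≤ P sa s') ∧ ∀ sa, ∑ s', P sa s' = 1

/-- A stationary (randomized) policy. -/
def IsPolicy {S A : Type*} [Fintype A] (π : S → A → ℝ) : Prop :=
  (∀ s a, 0 ≤ π s a) ∧ ∀ s, ∑ a, π s a = 1

/-- The transition matrix on state-action pairs induced by a policy. -/
def kernelMat {S A : Type*} (P : S × A → S → ℝ) (π : S → A → ℝ) :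
    Matrix (S × A) (S × A) ℝ :=
  fun sa sa' => P sa sa'.1 * π sa'.1 sa'.2

/-- The state-action value function `Q_b^{π,P} = ∑_{t} γ^t (P^π)^t b`. -/
noncomputable def Qval {S A : Type*} [Fintype S] [Fintype A] [DecidableEq S] [DecidableEq A]
    (γ : ℝ) (P : S × A → S → ℝ) (π : S → A → ℝ) (b : S × A → ℝ) : S × A → ℝ :=
  ∑' t : ℕ, γ ^ t • (kernelMat P π ^ t).mulVec b

/-- The value function `V_b^{π,P}(s) = ∑_a π(a|s) Q_b^{π,P}(s,a)`. -/
noncomputable def Vval {S A : Type*} [Fintype S] [Fintype A] [DecidableEq S] [DecidableEq A]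
    (γ : ℝ) (P : S × A → S → ℝ) (π : S → A → ℝ) (b : S × A → ℝ) (s : S) : ℝ :=
  ∑ a, π s a * Qval γ P π b (s, a)

/-- The value `V_b^{π,P}(μ) = ∑_s μ(s) V_b^{π,P}(s)`. -/
noncomputable def VvalMu {S A : Type*} [Fintype S] [Fintype A] [DecidableEq S] [DecidableEq A]
    (γ : ℝ) (P : S × A → S → ℝ) (π : S → A → ℝ) (b : S × A → ℝ) (μ : S → ℝ) : ℝ :=
  ∑ s, μ s * Vval γ P π b s

/-- The local variance `Var_P(v)(s,a)`. -/
def localVar {S A : Type*} [Fintype S] (P : S × A → S → ℝ) (v : S → ℝ) (sa : S × A) : ℝ :=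
  ∑ s', P sa s' * (v s') ^ 2 - (∑ s', P sa s' * v s') ^ 2

/-- The confidence radius `d_δ(s,a,s')` computed from `P̂` and `n`. -/
noncomputable def dDelta {S A : Type*} (Phat : S × A → S → ℝ) (n : ℕ) (δ : ℝ)
    (s : S) (a : A) (s' : S) : ℝ :=
  min (Real.sqrt (2 * Phat (s, a) s' * (1 - Phat (s, a) s') * Real.log (4 / δ) / n)
        + 4 * Real.log (4 / δ) / n)
      (Real.sqrt (Real.log (2 / δ) / (2 * n)))



/-!
`P^π` is row-stochastic, so for `0 ≤ γ < 1` the resolvent `N = ∑ₜ (γ P^π)ᵗ` converges entrywise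
and satisfies `N (1 - γ P^π) = 1`. Unrolling the recursion gives `ρₜ = ρ₀ (P^π)ᵗ`, hence
`ν = (1 - γ) ρ₀ N`, while `Q_r = N r`. Part (i) is the row identity `ν (1 - γ P^π) = (1 - γ) ρ₀`
summed over actions, and part (ii) is associativity: `ν ⬝ r = (1 - γ) ρ₀ ⬝ (N r)`.
-/

section MatrixSeries

variable {ι m n R : Type*} [Fintype n] [NonUnitalNonAssocSemiring R] [TopologicalSpace R]
  [IsTopologicalSemiring R]

theorem HasSum.matrix_mulVec {f : ι → Matrix m n R} {A : Matrix m n R} (hf : HasSum f A)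
    (v : n → R) : HasSum (fun i => f i *ᵥ v) (A *ᵥ v) :=
  hf.map (mulVec.addMonoidHomLeft v) (continuous_id.matrix_mulVec continuous_const)

theorem HasSum.matrix_vecMul {f : ι → Matrix n m R} {A : Matrix n m R} (hf : HasSum f A)
    (v : n → R) : HasSum (fun i => v ᵥ* f i) (v ᵥ* A) :=
  hf.map (⟨⟨(v ᵥ* ·), vecMul_zero v⟩, fun A B => vecMul_add A B v⟩ : Matrix n m R →+ m → R)
    (continuous_const.matrix_vecMul continuous_id)

end MatrixSeries

section PowerSeries

variable {n : Type*} [Fintype n] [DecidableEq n]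

theorem summable_smul_pow_of_mem_rowStochastic {M : Matrix n n ℝ} (hM : M ∈ rowStochastic ℝ n)
    {γ : ℝ} (hγ : |γ| < 1) : Summable fun t : ℕ => (γ • M) ^ t := by
  simp_rw [smul_pow]
  refine Pi.summable.2 fun i => Pi.summable.2 fun j =>
    .of_norm_bounded (summable_geometric_of_lt_one (abs_nonneg γ) hγ) fun t => ?_
  have hMt := pow_mem hM t
  rw [Matrix.smul_apply, smul_eq_mul, norm_mul, norm_pow, Real.norm_eq_abs,
    Real.norm_of_nonneg (nonneg_of_mem_rowStochastic hMt)]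
  exact mul_le_of_le_one_right (by positivity) (le_one_of_mem_rowStochastic hMt)

theorem hasSum_pow_mul_of_vecMul_succ {R : Type*} [CommSemiring R] [TopologicalSpace R]
    [IsTopologicalSemiring R] {M N : Matrix n n R} {γ : R}
    (hN : HasSum (fun t : ℕ => (γ • M) ^ t) N) {ρ : ℕ → n → R}
    (hρ : ∀ t, ρ (t + 1) = ρ t ᵥ* M) (x : n) :
    HasSum (fun t => γ ^ t * ρ t x) ((ρ 0 ᵥ* N) x) := by
  have hρ_pow : ∀ t, ρ t = ρ 0 ᵥ* M ^ t := by
    intro t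
    induction t with
    | zero => rw [pow_zero, vecMul_one]
    | succ t ih => rw [hρ, ih, vecMul_vecMul, pow_succ]
  have hterm : ∀ t, γ ^ t * ρ t x = (ρ 0 ᵥ* (γ • M) ^ t) x := fun t => by
    rw [hρ_pow, smul_pow, vecMul_smul, Pi.smul_apply, smul_eq_mul]
  simpa only [hterm] using Pi.hasSum.1 (hN.matrix_vecMul (ρ 0)) x

end PowerSeries

section MDP

variable {S A : Type*} [Fintype S] [Fintype A] [DecidableEq S] [DecidableEq A]
  {P : S × A → S → ℝ} {π : S → A → ℝ}

theorem kernelMat_mem_rowStochastic (hP : IsKernel P) (hπ : IsPolicy π) :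
    kernelMat P π ∈ rowStochastic ℝ (S × A) := by
  refine mem_rowStochastic_iff_sum.2 ⟨fun sa sa' => mul_nonneg (hP.1 _ _) (hπ.1 _ _), fun sa => ?_⟩
  simp only [kernelMat, Fintype.sum_prod_type, ← Finset.mul_sum, hπ.2, mul_one, hP.2]

theorem sum_vecMul_one_sub_smul_kernelMat (hπ : ∀ s, ∑ a, π s a = 1) (γ : ℝ) (v : S × A → ℝ)
    (s : S) :
    ∑ a, (v ᵥ* (1 - γ • kernelMat P π)) (s, a)
      = ∑ sa : S × A, v sa * ((if sa.1 = s then 1 else 0) - γ * P sa s) := by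
  have hdiag : ∑ sa : S × A, v sa * (if sa.1 = s then 1 else 0) = ∑ a, v (s, a) := by
    rw [Fintype.sum_prod_type, Finset.sum_comm]
    simp
  have hflow : ∑ a, (v ᵥ* kernelMat P π) (s, a) = ∑ sa : S × A, v sa * P sa s := by
    simp only [vecMul_apply_eq_sum, kernelMat, Finset.sum_comm (γ := A), ← mul_assoc,
      ← Finset.mul_sum, hπ, mul_one]
  rw [vecMul_sub, vecMul_one, vecMul_smul]
  simp only [Pi.sub_apply, Pi.smul_apply, smul_eq_mul, Finset.sum_sub_distrib, ← Finset.mul_sum,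
    hflow, mul_sub, hdiag]
  simp only [Finset.mul_sum, mul_left_comm]

theorem Qval_eq_mulVec_of_hasSum {γ : ℝ} {N : Matrix (S × A) (S × A) ℝ}
    (hN : HasSum (fun t : ℕ => (γ • kernelMat P π) ^ t) N) (b : S × A → ℝ) :
    Qval γ P π b = N *ᵥ b := by
  rw [Qval, ← (hN.matrix_mulVec b).tsum_eq]
  simp_rw [smul_pow, smul_mulVec]

theorem VvalMu_eq_dotProduct (γ : ℝ) (b : S × A → ℝ) (μ : S → ℝ) :
    VvalMu γ P π b μ = (fun sa : S × A => μ sa.1 * π sa.1 sa.2) ⬝ᵥ Qval γ P π b := by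
  simp only [VvalMu, Vval, dotProduct, Fintype.sum_prod_type, Finset.mul_sum, mul_assoc]

end MDP

theorem stmt_13_general {S A : Type*} [Fintype S] [Fintype A] [DecidableEq S] [DecidableEq A]
    (P : S × A → S → ℝ) (hP : IsKernel P)
    (π : S → A → ℝ) (hπ : IsPolicy π)
    (μ0 : S → ℝ)
    (γ : ℝ) (hγ : γ ∈ Set.Ico (0:ℝ) 1)
    (ρ : ℕ → S × A → ℝ)
    (hρ0 : ∀ sa : S × A, ρ 0 sa = μ0 sa.1 * π sa.1 sa.2)
    (hρsucc : ∀ t, ρ (t + 1) = Matrix.vecMul (ρ t) (kernelMat P π))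
    (ν : S × A → ℝ)
    (hν : ∀ sa, ν sa = (1 - γ) * ∑' t : ℕ, γ ^ t * ρ t sa) :
    (∀ s : S, ∑ sa : S × A, ν sa * ((if sa.1 = s then (1:ℝ) else 0) - γ * P sa s)
        = (1 - γ) * μ0 s)
    ∧ ∀ r : S × A → ℝ, ∑ sa : S × A, ν sa * r sa = (1 - γ) * VvalMu γ P π r μ0 := by
  have hN := (summable_smul_pow_of_mem_rowStochastic (kernelMat_mem_rowStochastic hP hπ)
    (abs_lt.2 ⟨by linarith [hγ.1], hγ.2⟩)).hasSum
  set N := ∑' t : ℕ, (γ • kernelMat P π) ^ t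
  have hνN : ν = (1 - γ) • (ρ 0 ᵥ* N) := funext fun sa => by
    rw [hν, (hasSum_pow_mul_of_vecMul_succ hN hρsucc sa).tsum_eq]
    rfl
  refine ⟨fun s => ?_, fun r => ?_⟩
  · rw [← sum_vecMul_one_sub_smul_kernelMat hπ.2, hνN, smul_vecMul, vecMul_vecMul,
      hN.summable.tsum_pow_mul_one_sub, vecMul_one]
    simp only [Pi.smul_apply, smul_eq_mul, ← Finset.mul_sum, hρ0, hπ.2 s, mul_one]
  · rw [VvalMu_eq_dotProduct, Qval_eq_mulVec_of_hasSum hN, ← funext hρ0, dotProduct_mulVec,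
      ← smul_eq_mul, ← smul_dotProduct, ← hνN]
    rfl

theorem stmt_13 {S A : Type*} [Fintype S] [Fintype A] [DecidableEq S] [DecidableEq A]
    [Nonempty S] [Nonempty A]
    (P : S × A → S → ℝ) (hP : IsKernel P)
    (π : S → A → ℝ) (hπ : IsPolicy π)
    (μ0 : S → ℝ) (hμ0 : (∀ s, 0 ≤ μ0 s) ∧ ∑ s, μ0 s = 1)
    (γ : ℝ) (hγ : γ ∈ Set.Ico (0:ℝ) 1)
    (ρ : ℕ → S × A → ℝ)
    (hρ0 : ∀ sa : S × A, ρ 0 sa = μ0 sa.1 * π sa.1 sa.2)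
    (hρsucc : ∀ t, ρ (t + 1) = Matrix.vecMul (ρ t) (kernelMat P π))
    (ν : S × A → ℝ)
    (hν : ∀ sa, ν sa = (1 - γ) * ∑' t : ℕ, γ ^ t * ρ t sa) :
    (∀ s : S, ∑ sa : S × A, ν sa * ((if sa.1 = s then (1:ℝ) else 0) - γ * P sa s)
        = (1 - γ) * μ0 s)
    ∧ ∀ r : S × A → ℝ, ∑ sa : S × A, ν sa * r sa = (1 - γ) * VvalMu γ P π r μ0 :=
  stmt_13_general P hP π hπ μ0 γ hγ ρ hρ0 hρsucc ν hν
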